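/- Let G be a zero-sum two-by-two game, i.e. Y_t = −X_t for t = 1,2,3,4. Then in every mixed-strategy Nash equilibrium (ν,μ) of G^Q, Player One's expected payoff is exactly P₁^Q(ν,μ) = (X₁ + X₂ + X₃ + X₄)/4. -/

import Mathlib

noncomputable section

open MeasureTheory

local notation "ℍ" => Quaternion ℝ

instance : MeasurableSpace (Quaternion ℝ) := borel _
instance : BorelSpace (Quaternion ℝ) := ⟨rfl⟩

/-- The four real coordinates of a quaternion: `p = π₁(p) + π₂(p)i + π₃(p)j + π₄(p)k`. -/
def piQ (t : Fin 4) (p : ℍ) : ℝ := ![p.re, p.imI, p.imJ, p.imK] t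

/-- The standard inner product on ℍ ≅ ℝ⁴. -/
def qinner (p q : ℍ) : ℝ := ∑ t : Fin 4, piQ t p * piQ t q

/-- The quaternions `i`, `j`, `k`. -/
def qI : ℍ := ⟨0, 1, 0, 0⟩
def qJ : ℍ := ⟨0, 0, 1, 0⟩
def qK : ℍ := ⟨0, 0, 0, 1⟩

/-- A mixed quantum strategy: a Borel probability measure on the unit quaternions. -/
def IsMixed (μ : Measure ℍ) : Prop :=
  IsProbabilityMeasure μ ∧ μ {p : ℍ | ‖p‖ = 1} = 1

/-- Quantum payoff with payoff vector `X`: `P^Q(p,q) = Σ_t π_t(pq)² X_t`. -/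
def payoff (X : Fin 4 → ℝ) (p q : ℍ) : ℝ :=
  ∑ t : Fin 4, (piQ t (p * q)) ^ 2 * X t

/-- Expected payoff of a pair of mixed strategies. -/
def payoffM (X : Fin 4 → ℝ) (ν μ : Measure ℍ) : ℝ :=
  ∫ p, ∫ q, payoff X p q ∂μ ∂ν

/-- Mixed-strategy Nash equilibrium of the quantum game with payoff vectors `X`, `Y`. -/
def IsNash (X Y : Fin 4 → ℝ) (ν μ : Measure ℍ) : Prop :=
  IsMixed ν ∧ IsMixed μ ∧
    (∀ ν' : Measure ℍ, IsMixed ν' → payoffM X ν' μ ≤ payoffM X ν μ) ∧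
    (∀ μ' : Measure ℍ, IsMixed μ' → payoffM Y ν μ' ≤ payoffM Y ν μ)

/-- Equivalence of mixed quantum strategies. -/
def StratEquiv (μ μ' : Measure ℍ) : Prop :=
  ∀ p : ℍ, ‖p‖ = 1 → ∀ t : Fin 4,
    ∫ q, (piQ t (p * q)) ^ 2 ∂μ = ∫ q, (piQ t (p * q)) ^ 2 ∂μ'

/-- Equivalence of pairs of mixed strategies: `(ν,μ) ∼ (ν',μ')` iff there is a unit
quaternion `u` with `ν' ∼ ν·u` and `μ' ∼ u⁻¹·μ`. -/
def PairEquiv (ν μ ν' μ' : Measure ℍ) : Prop :=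
  ∃ u : ℍ, ‖u‖ = 1 ∧
    StratEquiv (Measure.map (fun p => p * u) ν) ν' ∧
    StratEquiv (Measure.map (fun q => u⁻¹ * q) μ) μ'

/-- A generic two-by-two game: all payoffs distinct and all pairwise sums distinct. -/
def Generic (X Y : Fin 4 → ℝ) : Prop :=
  Function.Injective X ∧ Function.Injective Y ∧
    (∀ s t s' t' : Fin 4, s < t → s' < t' → X s + X t = X s' + X t' → s = s' ∧ t = t') ∧
    (∀ s t s' t' : Fin 4, s < t → s' < t' → Y s + Y t = Y s' + Y t' → s = s' ∧ t = t')

/-- `K(p) = π₁(p)π₂(p)π₃(p)π₄(p)`. -/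
def K (p : ℍ) : ℝ := p.re * p.imI * p.imJ * p.imK

/-- Intertwined quadruple of quaternions. -/
def Intertwined (p q r s : ℍ) : Prop :=
  ∃ α : ℝ, α ≠ 0 ∧ ∀ X Y : ℝ, α * K (X • p + Y • q) = K (X • r + Y • s)

/-- Fully intertwined quadruple of quaternions. -/
def FullyIntertwined (p q r s : ℍ) : Prop :=
  Intertwined p q r s ∧ Intertwined p r q s

/-- `p` is an optimal response for Player One to the mixed strategy `μ`. -/
def Optimal₁ (X : Fin 4 → ℝ) (μ : Measure ℍ) (p : ℍ) : Prop :=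
  ‖p‖ = 1 ∧ ∀ p' : ℍ, ‖p'‖ = 1 → ∫ q, payoff X p' q ∂μ ≤ ∫ q, payoff X p q ∂μ

/-- `q` is an optimal response for Player Two to the mixed strategy `ν`. -/
def Optimal₂ (Y : Fin 4 → ℝ) (ν : Measure ℍ) (q : ℍ) : Prop :=
  ‖q‖ = 1 ∧ ∀ q' : ℍ, ‖q'‖ = 1 → ∫ p, payoff Y p q' ∂ν ≤ ∫ p, payoff Y p q ∂ν

/-!
The uniform mixture of the four units `1, i, j, k` is an equalizing strategy for either player.
For each coordinate `t`, the numbers `π_t(u q)` with `u ∈ {1, i, j, k}` are, up to sign, the four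
coordinates of `q`, so `∑_u π_t(u q)² = ‖q‖² = 1`, and likewise for `π_t(q u)`. Hence against any
mixed strategy the uniform mixture yields exactly `(X₁ + X₂ + X₃ + X₄)/4`. In an equilibrium
Player One can therefore secure at least the average, and, the game being zero-sum, Player Two can
hold him to at most the average.
-/

attribute [local simp] Quaternion.re_one Quaternion.imI_one Quaternion.imJ_one Quaternion.imK_one

@[fun_prop]
lemma continuous_piQ (t : Fin 4) : Continuous (piQ t) := by
  fin_cases t
  exacts [Quaternion.continuous_re, Quaternion.continuous_imI,
    Quaternion.continuous_imJ, Quaternion.continuous_imK]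

lemma norm_sq_eq_sum_piQ_sq (r : ℍ) : ‖r‖ ^ 2 = ∑ t, piQ t r ^ 2 := by
  rw [sq, ← Quaternion.normSq_eq_norm_mul_self, Quaternion.normSq_def']
  simp [Fin.sum_univ_four, piQ]

def unitBasis : Fin 4 → ℍ := ![1, qI, qJ, qK]

lemma norm_unitBasis (s : Fin 4) : ‖unitBasis s‖ = 1 := by
  rw [← pow_eq_one_iff_of_nonneg (norm_nonneg _) two_ne_zero, norm_sq_eq_sum_piQ_sq]
  fin_cases s <;> simp [unitBasis, Fin.sum_univ_four, piQ, qI, qJ, qK]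

lemma sum_piQ_unitBasis_mul_sq (t : Fin 4) (q : ℍ) :
    ∑ s, piQ t (unitBasis s * q) ^ 2 = ‖q‖ ^ 2 := by
  rw [norm_sq_eq_sum_piQ_sq]
  fin_cases t <;> simp [unitBasis, Fin.sum_univ_four, piQ, qI, qJ, qK] <;> ring

lemma sum_piQ_mul_unitBasis_sq (t : Fin 4) (p : ℍ) :
    ∑ s, piQ t (p * unitBasis s) ^ 2 = ‖p‖ ^ 2 := by
  rw [norm_sq_eq_sum_piQ_sq]
  fin_cases t <;> simp [unitBasis, Fin.sum_univ_four, piQ, qI, qJ, qK] <;> ring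

lemma sum_payoff_unitBasis_mul (X : Fin 4 → ℝ) (q : ℍ) :
    ∑ s, payoff X (unitBasis s) q = ‖q‖ ^ 2 * ∑ t, X t := by
  simp only [payoff, Finset.sum_comm (γ := Fin 4), ← Finset.sum_mul, sum_piQ_unitBasis_mul_sq,
    Finset.mul_sum]

lemma sum_payoff_mul_unitBasis (X : Fin 4 → ℝ) (p : ℍ) :
    ∑ s, payoff X p (unitBasis s) = ‖p‖ ^ 2 * ∑ t, X t := by
  simp only [payoff, Finset.sum_comm (γ := Fin 4), ← Finset.sum_mul, sum_piQ_mul_unitBasis_sq,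
    Finset.mul_sum]

lemma continuous_payoff (X : Fin 4 → ℝ) (p : ℍ) : Continuous (payoff X p) := by
  unfold payoff
  fun_prop

lemma IsMixed.ae_norm_eq_one {μ : Measure ℍ} (hμ : IsMixed μ) : ∀ᵐ p ∂μ, ‖p‖ = 1 := by
  have := hμ.1
  rw [ae_iff_measure_eq (isClosed_eq continuous_norm continuous_const).nullMeasurableSet,
    hμ.2, measure_univ]

lemma IsMixed.integrable {μ : Measure ℍ} (hμ : IsMixed μ) {f : ℍ → ℝ} (hf : Continuous f) :
    Integrable f μ := by
  have := hμ.1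
  have hsphere : ∀ᵐ p ∂μ, p ∈ Metric.sphere (0 : ℍ) 1 := by simpa using hμ.ae_norm_eq_one
  rw [← Measure.restrict_eq_self_of_ae_mem hsphere]
  exact hf.continuousOn.integrableOn_compact (isCompact_sphere 0 1)

lemma IsMixed.integral_norm_sq_mul {μ : Measure ℍ} (hμ : IsMixed μ) (c : ℝ) :
    ∫ p, ‖p‖ ^ 2 * c ∂μ = c := by
  have := hμ.1
  rw [integral_congr_ae (g := fun _ => c) (hμ.ae_norm_eq_one.mono fun p hp => by simp [hp]),
    integral_const, probReal_univ, one_smul]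

def uniformUnits : Measure ℍ := (4 : ENNReal)⁻¹ • ∑ s, Measure.dirac (unitBasis s)

lemma uniformUnits_apply_of_forall_mem {S : Set ℍ} (hS : ∀ s, unitBasis s ∈ S) :
    uniformUnits S = 1 := by
  simp only [uniformUnits, Measure.smul_apply, Measure.coe_finsetSum, Finset.sum_apply,
    Measure.dirac_apply_of_mem (hS _), Finset.sum_const, Finset.card_univ, Fintype.card_fin,
    nsmul_eq_mul, Nat.cast_ofNat, mul_one, smul_eq_mul]
  exact ENNReal.inv_mul_cancel (by norm_num) (by norm_num)

lemma isMixed_uniformUnits : IsMixed uniformUnits :=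
  ⟨⟨uniformUnits_apply_of_forall_mem fun _ => trivial⟩,
    uniformUnits_apply_of_forall_mem norm_unitBasis⟩

lemma integral_uniformUnits (f : ℍ → ℝ) :
    ∫ p, f p ∂uniformUnits = (∑ s, f (unitBasis s)) / 4 := by
  rw [uniformUnits, integral_smul_measure,
    integral_finsetSum_measure fun s _ => integrable_dirac enorm_lt_top]
  simp [integral_dirac, div_eq_inv_mul]

lemma payoffM_uniformUnits_left (X : Fin 4 → ℝ) {μ : Measure ℍ} (hμ : IsMixed μ) :
    payoffM X uniformUnits μ = (∑ t, X t) / 4 := by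
  rw [payoffM, integral_uniformUnits,
    ← integral_finsetSum _ fun s _ => hμ.integrable (continuous_payoff X _)]
  simp_rw [sum_payoff_unitBasis_mul, hμ.integral_norm_sq_mul]

lemma payoffM_uniformUnits_right (X : Fin 4 → ℝ) {ν : Measure ℍ} (hν : IsMixed ν) :
    payoffM X ν uniformUnits = (∑ t, X t) / 4 := by
  simp_rw [payoffM, integral_uniformUnits, sum_payoff_mul_unitBasis, mul_div_assoc]
  exact hν.integral_norm_sq_mul _

lemma payoffM_neg (X : Fin 4 → ℝ) (ν μ : Measure ℍ) : payoffM (-X) ν μ = -payoffM X ν μ := by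
  simp [payoffM, payoff, integral_neg]

/-- In every mixed-strategy quantum Nash equilibrium of a zero-sum game,
Player One earns exactly the average `(X₁ + X₂ + X₃ + X₄)/4`. -/
theorem zero_sum_nash_payoff_eq_average (X Y : Fin 4 → ℝ) (hzero : ∀ t, Y t = -X t)
    (ν μ : Measure ℍ) (hnash : IsNash X Y ν μ) :
    payoffM X ν μ = (∑ t : Fin 4, X t) / 4 := by
  obtain ⟨hν, hμ, hbest₁, hbest₂⟩ := hnash
  obtain rfl : Y = -X := funext hzero
  have hlower := hbest₁ _ isMixed_uniformUnits
  have hupper := hbest₂ _ isMixed_uniformUnits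
  rw [payoffM_uniformUnits_left X hμ] at hlower
  rw [payoffM_neg, payoffM_neg, payoffM_uniformUnits_right X hν] at hupper
  linarith
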